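/- Fix L_C > 0. Let x₁ ∈ ℝ, x₂ ∈ [−L_C, L_C], and let y₂ ∈ ℂ satisfy either (Re y₂ > L_C and Im y₂ ≥ 0) or (Re y₂ < −L_C and Im y₂ ≤ 0). Then (y₂ − x₂)² has nonnegative imaginary part and does not lie in (−∞, 0]; moreover x₁² + (y₂ − x₂)² does not lie in (−∞, 0], and 0 ≤ Im √(x₁² + (y₂ − x₂)²) ≤ |Im y₂|, where √ is the principal square root. -/

import Mathlib

/-!
Write `w = y₂ - x₂`. The hypotheses give `Re w ≠ 0` and `Re w · Im w ≥ 0`, so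
`Im (x₁² + w²) = 2 Re w Im w ≥ 0`, and `x₁² + w²` is real only when `Im w = 0`, in which case it
equals `x₁² + (Re w)² > 0`. For `z` in the closed upper half-plane `Im √z = √((‖z‖ - Re z) / 2)`,
and `‖x₁² + w²‖ ≤ Re (x₁² + w²) + 2 (Im w)²` because
`(x₁² + a² + t²)² - ‖x₁² + w²‖² = 4 x₁² t² ≥ 0` for `w = a + t i`.
-/

namespace Complex

lemma im_ofReal_sq_add_sq (x : ℝ) (w : ℂ) : ((x : ℂ) ^ 2 + w ^ 2).im = 2 * (w.re * w.im) := by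
  simp only [sq, add_im, mul_im, ofReal_re, ofReal_im]
  ring

lemma re_ofReal_sq_add_sq (x : ℝ) (w : ℂ) :
    ((x : ℂ) ^ 2 + w ^ 2).re = x ^ 2 + w.re ^ 2 - w.im ^ 2 := by
  simp only [sq, add_re, mul_re, ofReal_re, ofReal_im]
  ring

lemma ofReal_sq_add_sq_mem_slitPlane (x : ℝ) {w : ℂ} (hre : w.re ≠ 0) :
    (x : ℂ) ^ 2 + w ^ 2 ∈ slitPlane := by
  rw [mem_slitPlane_iff, im_ofReal_sq_add_sq, re_ofReal_sq_add_sq]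
  by_cases him : w.im = 0
  · left
    rw [him]
    nlinarith [sq_nonneg x, sq_pos_of_ne_zero hre]
  · right
    exact mul_ne_zero two_ne_zero (mul_ne_zero hre him)

lemma notMem_re_nonpos_real_of_mem_slitPlane {z : ℂ} (hz : z ∈ slitPlane) :
    z ∉ {z : ℂ | z.im = 0 ∧ z.re ≤ 0} := by
  rintro ⟨him, hre⟩
  rcases mem_slitPlane_iff.1 hz with hpos | hne
  · linarith
  · exact hne him

lemma norm_ofReal_sq_add_sq_le (x : ℝ) (w : ℂ) :
    ‖(x : ℂ) ^ 2 + w ^ 2‖ ≤ ((x : ℂ) ^ 2 + w ^ 2).re + 2 * w.im ^ 2 := by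
  set z := (x : ℂ) ^ 2 + w ^ 2
  have hz : z.re + 2 * w.im ^ 2 = x ^ 2 + w.re ^ 2 + w.im ^ 2 := by
    rw [re_ofReal_sq_add_sq]
    ring
  rw [hz, ← Real.sqrt_sq (by positivity : 0 ≤ x ^ 2 + w.re ^ 2 + w.im ^ 2), norm_eq_sqrt_sq_add_sq]
  apply Real.sqrt_le_sqrt
  rw [re_ofReal_sq_add_sq, im_ofReal_sq_add_sq]
  nlinarith [sq_nonneg (x * w.im)]

lemma im_cpow_half_ofReal_sq_add_sq_le (x : ℝ) {w : ℂ} (h : 0 ≤ ((x : ℂ) ^ 2 + w ^ 2).im) :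
    (((x : ℂ) ^ 2 + w ^ 2) ^ (1 / 2 : ℂ)).im ≤ |w.im| := by
  rw [one_div, cpow_inv_two_im_eq_sqrt h, ← Real.sqrt_sq_eq_abs]
  apply Real.sqrt_le_sqrt
  linarith [norm_ofReal_sq_add_sq_le x w]

end Complex

open Complex in
theorem statement_15 (L : ℝ) (x₁ x₂ : ℝ) (hx₂ : x₂ ∈ Set.Icc (-L) L)
    (y₂ : ℂ) (hy : (L < y₂.re ∧ 0 ≤ y₂.im) ∨ (y₂.re < -L ∧ y₂.im ≤ 0)) :
    0 ≤ ((y₂ - (x₂ : ℂ)) ^ 2).im ∧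
    (y₂ - (x₂ : ℂ)) ^ 2 ∉ {z : ℂ | z.im = 0 ∧ z.re ≤ 0} ∧
    ((x₁ : ℂ) ^ 2 + (y₂ - (x₂ : ℂ)) ^ 2) ∉ {z : ℂ | z.im = 0 ∧ z.re ≤ 0} ∧
    0 ≤ (((x₁ : ℂ) ^ 2 + (y₂ - (x₂ : ℂ)) ^ 2) ^ (1/2 : ℂ)).im ∧
    (((x₁ : ℂ) ^ 2 + (y₂ - (x₂ : ℂ)) ^ 2) ^ (1/2 : ℂ)).im ≤ |y₂.im| := by
  set w := y₂ - (x₂ : ℂ)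
  obtain ⟨hre, hsign⟩ : w.re ≠ 0 ∧ 0 ≤ w.re * w.im := by
    simp only [w, sub_re, sub_im, ofReal_re, ofReal_im, sub_zero]
    rcases hy with ⟨hlt, him⟩ | ⟨hlt, him⟩
    · exact ⟨by linarith [hx₂.2], mul_nonneg (by linarith [hx₂.2]) him⟩
    · exact ⟨by linarith [hx₂.1], mul_nonneg_of_nonpos_of_nonpos (by linarith [hx₂.1]) him⟩
  have not_on_cut : ∀ x : ℝ, (x : ℂ) ^ 2 + w ^ 2 ∉ {z : ℂ | z.im = 0 ∧ z.re ≤ 0} :=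
    fun x => notMem_re_nonpos_real_of_mem_slitPlane (ofReal_sq_add_sq_mem_slitPlane x hre)
  have him_nonneg : ∀ x : ℝ, 0 ≤ ((x : ℂ) ^ 2 + w ^ 2).im := fun x => by
    rw [im_ofReal_sq_add_sq]
    positivity
  refine ⟨by simpa using him_nonneg 0, by simpa using not_on_cut 0, not_on_cut x₁, ?_,
    by simpa [w] using im_cpow_half_ofReal_sq_add_sq_le x₁ (him_nonneg x₁)⟩
  rw [one_div, cpow_inv_two_im_eq_sqrt (him_nonneg x₁)]
  exact Real.sqrt_nonneg _
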